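/- arXiv:2602.17319 — 3 statements merged into one kernel-verified Lean document; each statement's English description precedes it below -/
import Mathlib

section
/- Let X be a random vector in ℝ^d with ‖X‖ ≤ r almost surely for some r > 0. Then Ψ* is a good rate function: Ψ* is nonnegative, lower semicontinuous, and for every c ∈ ℝ the sublevel set {v ∈ ℝ^d : Ψ*(v) ≤ c} is compact. -/
open MeasureTheory ProbabilityTheory Filter Real
open scoped RealInnerProductSpace

noncomputable section

abbrev Euc (d : ℕ) : Type := EuclideanSpace ℝ (Fin d)

lemma integrable_abs_gaussianReal : Integrable (fun z : ℝ => |z|) (gaussianReal 0 1) := by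
  rw [gaussianReal_of_var_ne_zero 0 one_ne_zero]
  have hmeas : Measurable (gaussianPDF 0 1) :=
    (measurable_gaussianPDFReal 0 1).ennreal_ofReal
  rw [integrable_withDensity_iff hmeas
      (Eventually.of_forall fun x => ENNReal.ofReal_lt_top)]
  have h1 : Integrable (fun x : ℝ => |x * rexp (-(1/2) * x ^ 2)|) volume :=
    (integrable_mul_exp_neg_mul_sq (by norm_num : (0:ℝ) < 1/2)).abs
  have h2 := h1.const_mul (√(2 * π))⁻¹
  refine h2.congr (Eventually.of_forall fun x => ?_)
  show (√(2 * π))⁻¹ * |x * rexp (-(1/2) * x ^ 2)| = |x| * (gaussianPDF 0 1 x).toReal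
  rw [show gaussianPDF 0 1 x = ENNReal.ofReal (gaussianPDFReal 0 1 x) from rfl,
    ENNReal.toReal_ofReal (gaussianPDFReal_nonneg _ _ _), gaussianPDFReal]
  rw [abs_mul, abs_of_pos (exp_pos _)]
  rw [show (-(x - 0) ^ 2 / (2 * ((1:NNReal):ℝ))) = -(1/2) * x ^ 2 by push_cast; ring]
  push_cast
  ring_nf

theorem weighted_rate_function_is_good
    {Ω : Type*} [MeasurableSpace Ω] (P : Measure Ω) [IsProbabilityMeasure P]
    {d : ℕ} (X : Ω → Euc d) (hXmeas : Measurable X)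
    (r : ℝ) (hr : 0 < r) (hXbdd : ∀ᵐ ω ∂P, ‖X ω‖ ≤ r)
    (Λ : Euc d → ℝ) (hΛ : Λ = fun l => Real.log (∫ ω, Real.exp ⟪l, X ω⟫ ∂P))
    (Ψ : Euc d → ℝ) (hΨ : Ψ = fun l => ∫ z, Λ (z • l) ∂(gaussianReal 0 1))
    (Ψstar : Euc d → EReal)
    (hΨstar : Ψstar = fun v => ⨆ l : Euc d, ((⟪l, v⟫ - Ψ l : ℝ) : EReal)) :
    (∀ v, 0 ≤ Ψstar v) ∧ LowerSemicontinuous Ψstar ∧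
      ∀ c : ℝ, IsCompact {v : Euc d | Ψstar v ≤ (c : EReal)} := by
  -- basic bound on Λ
  have hΛbdd : ∀ l : Euc d, |Λ l| ≤ ‖l‖ * r := by
    intro l
    have hmeas : AEStronglyMeasurable (fun ω => rexp ⟪l, X ω⟫) P :=
      ((measurable_const.inner hXmeas).exp).aestronglyMeasurable
    have hub : ∀ᵐ ω ∂P, rexp ⟪l, X ω⟫ ≤ rexp (‖l‖ * r) := by
      filter_upwards [hXbdd] with ω hω
      exact exp_le_exp.2 (le_trans (real_inner_le_norm l (X ω))
        (mul_le_mul_of_nonneg_left hω (norm_nonneg l)))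
    have hlb : ∀ᵐ ω ∂P, rexp (-(‖l‖ * r)) ≤ rexp ⟪l, X ω⟫ := by
      filter_upwards [hXbdd] with ω hω
      refine exp_le_exp.2 (neg_le_of_neg_le ?_)
      calc -⟪l, X ω⟫ ≤ |⟪l, X ω⟫| := neg_le_abs _
        _ ≤ ‖l‖ * ‖X ω‖ := abs_real_inner_le_norm l (X ω)
        _ ≤ ‖l‖ * r := mul_le_mul_of_nonneg_left hω (norm_nonneg l)
    have hint : Integrable (fun ω => rexp ⟪l, X ω⟫) P := by
      refine Integrable.mono' (integrable_const (rexp (‖l‖ * r))) hmeas ?_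
      filter_upwards [hub] with ω hω
      rwa [Real.norm_eq_abs, abs_of_pos (exp_pos _)]
    have hIub : (∫ ω, rexp ⟪l, X ω⟫ ∂P) ≤ rexp (‖l‖ * r) := by
      calc (∫ ω, rexp ⟪l, X ω⟫ ∂P) ≤ ∫ _, rexp (‖l‖ * r) ∂P :=
            integral_mono_ae hint (integrable_const _) hub
        _ = rexp (‖l‖ * r) := by simp
    have hIlb : rexp (-(‖l‖ * r)) ≤ ∫ ω, rexp ⟪l, X ω⟫ ∂P := by
      calc rexp (-(‖l‖ * r)) = ∫ _, rexp (-(‖l‖ * r)) ∂P := by simp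
        _ ≤ ∫ ω, rexp ⟪l, X ω⟫ ∂P := integral_mono_ae (integrable_const _) hint hlb
    have hpos : 0 < ∫ ω, rexp ⟪l, X ω⟫ ∂P := lt_of_lt_of_le (exp_pos _) hIlb
    rw [hΛ, abs_le]
    constructor
    · calc -(‖l‖ * r) = Real.log (rexp (-(‖l‖ * r))) := (Real.log_exp _).symm
        _ ≤ Real.log (∫ ω, rexp ⟪l, X ω⟫ ∂P) := Real.log_le_log (exp_pos _) hIlb
    · calc Real.log (∫ ω, rexp ⟪l, X ω⟫ ∂P) ≤ Real.log (rexp (‖l‖ * r)) :=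
            Real.log_le_log hpos hIub
        _ = ‖l‖ * r := Real.log_exp _
  -- Λ 0 = 0, Ψ 0 = 0
  have hΛ0 : Λ 0 = 0 := by
    rw [hΛ]
    simp
  have hΨ0 : Ψ 0 = 0 := by
    rw [hΨ]
    simp [smul_zero, hΛ0]
  set C : ℝ := ∫ z, |z| ∂(gaussianReal 0 1) with hC
  have hCnn : 0 ≤ C := integral_nonneg fun z => abs_nonneg z
  -- bound on Ψ
  have hΨbdd : ∀ l : Euc d, Ψ l ≤ C * (‖l‖ * r) := by
    intro l
    have hb : ∀ z : ℝ, Λ (z • l) ≤ |z| * (‖l‖ * r) := by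
      intro z
      have := hΛbdd (z • l)
      rw [norm_smul, Real.norm_eq_abs] at this
      calc Λ (z • l) ≤ |Λ (z • l)| := le_abs_self _
        _ ≤ |z| * ‖l‖ * r := this
        _ = |z| * (‖l‖ * r) := by ring
    have hRint : Integrable (fun z : ℝ => |z| * (‖l‖ * r)) (gaussianReal 0 1) :=
      integrable_abs_gaussianReal.mul_const _
    by_cases hInt : Integrable (fun z : ℝ => Λ (z • l)) (gaussianReal 0 1)
    · rw [hΨ]
      calc (∫ z, Λ (z • l) ∂(gaussianReal 0 1))
          ≤ ∫ z, |z| * (‖l‖ * r) ∂(gaussianReal 0 1) :=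
            integral_mono hInt hRint fun z => hb z
        _ = C * (‖l‖ * r) := by rw [integral_mul_const]
    · rw [hΨ]
      dsimp only
      rw [integral_undef hInt]
      positivity
  refine ⟨?_, ?_, ?_⟩
  · intro v
    have h0 : ((⟪(0 : Euc d), v⟫ - Ψ 0 : ℝ) : EReal) ≤ Ψstar v := by
      rw [hΨstar]; exact le_iSup (fun l : Euc d => ((⟪l, v⟫ - Ψ l : ℝ) : EReal)) 0
    rw [hΨ0, inner_zero_left] at h0
    simpa using h0
  · rw [hΨstar]
    apply lowerSemicontinuous_iSup
    intro l
    have hcont : Continuous fun v : Euc d => ((⟪l, v⟫ - Ψ l : ℝ) : EReal) :=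
      continuous_coe_real_ereal.comp ((continuous_const.inner continuous_id).sub continuous_const)
    exact hcont.lowerSemicontinuous
  · intro c
    have hclosed : IsClosed {v : Euc d | Ψstar v ≤ (c : EReal)} := by
      have hlsc : LowerSemicontinuous Ψstar := by
        rw [hΨstar]
        apply lowerSemicontinuous_iSup
        intro l
        exact (continuous_coe_real_ereal.comp
          ((continuous_const.inner continuous_id).sub continuous_const)).lowerSemicontinuous
      exact hlsc.isClosed_preimage c
    have hsub : {v : Euc d | Ψstar v ≤ (c : EReal)} ⊆
        Metric.closedBall 0 (C * r + |c| + 1) := by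
      intro v hv
      simp only [Set.mem_setOf_eq] at hv
      have h1 : ((⟪v, v⟫ - Ψ v : ℝ) : EReal) ≤ (c : EReal) := by
        refine le_trans ?_ hv
        rw [hΨstar]
        exact le_iSup (fun l : Euc d => ((⟪l, v⟫ - Ψ l : ℝ) : EReal)) v
      have h2 : ⟪v, v⟫ - Ψ v ≤ c := EReal.coe_le_coe_iff.1 h1
      have h3 : ‖v‖ ^ 2 - Ψ v ≤ c := by
        rwa [real_inner_self_eq_norm_sq] at h2
      have h4 : Ψ v ≤ C * (‖v‖ * r) := hΨbdd v
      rw [Metric.mem_closedBall, dist_zero_right]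
      nlinarith [norm_nonneg v, abs_nonneg c, le_abs_self c, hCnn, hr.le,
        mul_nonneg hCnn hr.le]
    exact (isCompact_closedBall 0 _).of_isClosed_subset hclosed hsub

end
end

section
/- Let μ₁ be a probability measure on ℝ whose log-moment generating function Λ₁ is finite everywhere and satisfies E[Λ₁(tZ)] < ∞ for all t ∈ ℝ (Z a standard real Gaussian). Then for every integer k ≥ 1 and every c ∈ ℝ, I_k(c·𝟙_k) = k · I_proj((c/√k)·𝟙_k), where 𝟙_k ∈ ℝ^k denotes the all-ones vector. -/
open MeasureTheory ProbabilityTheory Real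
open scoped ENNReal NNReal

noncomputable section

def Fg (Λ : ℝ → ℝ) (t : ℝ) : ℝ := ∫ z, Λ (t * z) ∂(gaussianReal 0 1)

lemma Fg_apply (Λ : ℝ → ℝ) (t : ℝ) : Fg Λ t = ∫ z, Λ (t * z) ∂(gaussianReal 0 1) := rfl

lemma lintegral_pi_prod_aux : ∀ (n : ℕ) (f : Fin n → ℝ → ℝ≥0∞), (∀ i, Measurable (f i)) →
    ∫⁻ z : Fin n → ℝ, ∏ i, f i (z i) ∂(Measure.pi fun _ => (volume : Measure ℝ))
      = ∏ i, ∫⁻ x, f i x := by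
  intro n
  induction n with
  | zero =>
    intro f hf
    simp [lintegral_const, Measure.pi_univ]
  | succ n ih =>
    intro f hf
    have hmp := MeasurePreserving.symm _
      (measurePreserving_piFinSuccAbove (fun _ : Fin (n+1) => (volume : Measure ℝ)) 0)
    have hmeas : Measurable fun z : Fin (n+1) → ℝ => ∏ i, f i (z i) :=
      Finset.measurable_prod _ fun i _ => (hf i).comp (measurable_pi_apply i)
    rw [← hmp.lintegral_comp hmeas]
    have hpt : ∀ p : ℝ × (Fin n → ℝ),
        (∏ i, f i (((MeasurableEquiv.piFinSuccAbove (fun _ : Fin (n+1) => ℝ) 0).symm p) i))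
          = f 0 p.1 * ∏ j : Fin n, f j.succ (p.2 j) := by
      intro p
      rw [Fin.prod_univ_succ]
      simp [MeasurableEquiv.piFinSuccAbove_symm_apply, Fin.insertNthEquiv, Fin.insertNth_zero,
        Fin.zero_succAbove, Fin.cons_zero, Fin.cons_succ]
    simp_rw [hpt]
    rw [lintegral_prod_mul (f := f 0) (g := fun y : Fin n → ℝ => ∏ j, f j.succ (y j))
      (hf 0).aemeasurable
      (Finset.measurable_prod _ fun (j : Fin n) _ =>
        (hf j.succ).comp (measurable_pi_apply j)).aemeasurable]
    rw [ih (fun j => f j.succ) (fun j => hf j.succ), Fin.prod_univ_succ]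

lemma pi_gaussian_eq (k : ℕ) :
    (Measure.pi fun _ : Fin k => gaussianReal 0 1)
      = (volume : Measure (Fin k → ℝ)).withDensity (fun z => ∏ i, gaussianPDF 0 1 (z i)) := by
  refine Measure.pi_eq fun s hs => ?_
  rw [withDensity_apply _ (MeasurableSet.univ_pi hs),
    ← lintegral_indicator (MeasurableSet.univ_pi hs)]
  have hind : ∀ z : Fin k → ℝ,
      (Set.univ.pi s).indicator (fun z => ∏ i, gaussianPDF 0 1 (z i)) z
        = ∏ i, (s i).indicator (gaussianPDF 0 1) (z i) := by
    intro z
    by_cases hz : z ∈ Set.univ.pi s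
    · rw [Set.indicator_of_mem hz]
      exact Finset.prod_congr rfl fun i _ =>
        (Set.indicator_of_mem (hz i (Set.mem_univ i)) _).symm
    · rw [Set.indicator_of_notMem hz]
      have : ∃ i, z i ∉ s i := by simpa [Set.mem_pi] using hz
      obtain ⟨i, hi⟩ := this
      exact (Finset.prod_eq_zero (Finset.mem_univ i)
        (by rw [Set.indicator_of_notMem hi])).symm
  simp_rw [hind]
  rw [volume_pi, lintegral_pi_prod_aux k _
    (fun i => (measurable_gaussianPDF _ _).indicator (hs i))]
  refine Finset.prod_congr rfl fun i _ => ?_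
  rw [lintegral_indicator (hs i) _, ← gaussianReal_apply 0 one_ne_zero (s i)]

lemma map_eval_pi_gaussian (k : ℕ) (i₀ : Fin k) :
    (Measure.pi fun _ : Fin k => gaussianReal 0 1).map (fun z => z i₀) = gaussianReal 0 1 := by
  ext s hs
  rw [Measure.map_apply (measurable_pi_apply i₀) hs,
    show (fun z : Fin k → ℝ => z i₀) ⁻¹' s
      = Set.pi Set.univ (Function.update (fun _ => Set.univ) i₀ s) from Set.eval_preimage,
    Measure.pi_pi]
  rw [Finset.prod_eq_single i₀
    (fun i _ hne => by rw [Function.update_of_ne hne]; exact measure_univ)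
    (fun h => absurd (Finset.mem_univ _) h)]
  rw [Function.update_self]

lemma ereal_k_mul_iSup (k : ℕ) (hk : 1 ≤ k) (g : ℝ → ℝ) :
    (⨆ t : ℝ, (((k : ℝ) * g t : ℝ) : EReal)) = (k : EReal) * ⨆ t : ℝ, ((g t : ℝ) : EReal) := by
  have hk0 : (0:ℝ) < k := by exact_mod_cast Nat.lt_of_lt_of_le Nat.zero_lt_one hk
  have hk1 : (1:ℝ) ≤ k := by exact_mod_cast hk
  have hcast : ((k:ℝ) : EReal) = (k : EReal) := by norm_cast
  set S := ⨆ t : ℝ, ((g t : ℝ) : EReal) with hS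
  have hSbot : (⊥:EReal) < S :=
    lt_of_lt_of_le (EReal.bot_lt_coe (g 0)) (le_iSup (fun t => ((g t : ℝ) : EReal)) 0)
  rcases eq_top_or_lt_top S with htop | hlt
  · rw [htop, ← hcast, EReal.coe_mul_top_of_pos hk0]
    rw [iSup_eq_top]
    intro b hb
    have h2 : ∀ b' : EReal, b' < ⊤ → ∃ t, b' < ((g t : ℝ) : EReal) := by
      rw [hS, iSup_eq_top] at htop; exact htop
    obtain ⟨t, ht⟩ := h2 (max b 0) (max_lt hb (by simp))
    have hb' : b < ((g t : ℝ) : EReal) := lt_of_le_of_lt (le_max_left _ _) ht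
    have h0 : (0:ℝ) ≤ g t := by
      have := lt_of_le_of_lt (le_max_right _ _) ht
      exact_mod_cast this.le
    refine ⟨t, lt_of_lt_of_le hb' ?_⟩
    exact_mod_cast le_mul_of_one_le_left h0 hk1
  · obtain ⟨s, hs⟩ : ∃ s : ℝ, S = (s : EReal) :=
      ⟨S.toReal, (EReal.coe_toReal hlt.ne hSbot.ne').symm⟩
    rw [hs, ← hcast, ← EReal.coe_mul]
    apply le_antisymm
    · refine iSup_le fun t => ?_
      have hgt : g t ≤ s := by
        have : ((g t : ℝ) : EReal) ≤ (s : EReal) := hs ▸ le_iSup (fun t => ((g t : ℝ) : EReal)) t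
        exact_mod_cast this
      exact_mod_cast mul_le_mul_of_nonneg_left hgt hk0.le
    · refine le_of_forall_lt fun b hb => ?_
      induction b with
      | bot =>
        exact lt_of_lt_of_le (EReal.bot_lt_coe _)
          (le_iSup (fun t => (((k:ℝ) * g t : ℝ) : EReal)) 0)
      | coe b =>
        have hb' : b < (k:ℝ) * s := by exact_mod_cast hb
        have hε : 0 < ((k:ℝ) * s - b) / k := div_pos (by linarith) hk0
        have hex : ∃ t, s - ((k:ℝ) * s - b) / k < g t := by
          by_contra h
          push_neg at h
          have hle : S ≤ ((s - ((k:ℝ)*s - b)/k : ℝ) : EReal) :=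
            iSup_le fun t => by exact_mod_cast h t
          rw [hs] at hle
          have : s ≤ s - ((k:ℝ)*s - b)/k := by exact_mod_cast hle
          linarith
        obtain ⟨t, ht⟩ := hex
        refine lt_of_lt_of_le ?_ (le_iSup (fun t => (((k:ℝ) * g t : ℝ) : EReal)) t)
        have h2 : (k:ℝ) * (s - ((k:ℝ)*s - b)/k) = b := by field_simp; ring
        have := mul_lt_mul_of_pos_left ht hk0
        rw [h2] at this
        exact_mod_cast this
      | top => exact absurd hb (by simp)

theorem Ik_eq_k_mul_Iproj_on_diagonal
    (μ₁ : Measure ℝ) [IsProbabilityMeasure μ₁]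
    (Λ₁ : ℝ → ℝ) (hΛ₁ : Λ₁ = fun t => Real.log (∫ x, Real.exp (t * x) ∂μ₁))
    -- `Λ₁` is finite everywhere
    (hmgf : ∀ t : ℝ, Integrable (fun x => Real.exp (t * x)) μ₁)
    -- `E[Λ₁(tZ)] < ∞` for all `t`
    (hgauss : ∀ t : ℝ, Integrable (fun z => Λ₁ (t * z)) (gaussianReal 0 1))
    (k : ℕ) (hk : 1 ≤ k)
    (Ik Iproj : (Fin k → ℝ) → EReal)
    (hIk : Ik = fun v => ⨆ l : Fin k → ℝ,
      (((∑ i, v i * l i) - ∑ i, ∫ z, Λ₁ (l i * z) ∂(gaussianReal 0 1) : ℝ) : EReal))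
    (hIproj : Iproj = fun v => ⨆ l : Fin k → ℝ,
      (((∑ i, v i * l i) -
        ∫ z, Λ₁ (∑ i, l i * z i) ∂(Measure.pi fun _ : Fin k => gaussianReal 0 1) : ℝ) : EReal))
    (c : ℝ) :
    Ik (fun _ => c) = (k : EReal) * Iproj (fun _ => c / Real.sqrt k) := by
  have hk0 : (0:ℝ) < k := by exact_mod_cast Nat.lt_of_lt_of_le Nat.zero_lt_one hk
  have hks : (0:ℝ) < Real.sqrt k := Real.sqrt_pos.2 hk0
  have i₀ : Fin k := ⟨0, hk⟩
  -- measurability of Λ₁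
  have hM : Measurable fun t : ℝ => ∫ x, Real.exp (t * x) ∂μ₁ := by
    have hcont : StronglyMeasurable fun p : ℝ × ℝ => Real.exp (p.1 * p.2) :=
      (Real.continuous_exp.comp (continuous_fst.mul continuous_snd)).stronglyMeasurable
    exact hcont.integral_prod_right'.measurable
  have hΛm : Measurable Λ₁ := by rw [hΛ₁]; exact Real.measurable_log.comp hM
  -- evenness of Fg
  have hFneg : ∀ t : ℝ, Fg Λ₁ (-t) = Fg Λ₁ t := by
    intro t
    have hone : (NNReal.mk ((-1:ℝ)^2) (sq_nonneg _)) = 1 := by ext; norm_num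
    have hmapneg : (gaussianReal 0 1).map (fun x => (-1:ℝ) * x) = gaussianReal 0 1 := by
      rw [show (fun x => (-1:ℝ) * x) = ((-1:ℝ) * ·) from rfl, gaussianReal_map_const_mul,
        hone, one_mul, mul_zero]
    have : Fg Λ₁ t = Fg Λ₁ (-t) := by
      calc Fg Λ₁ t = ∫ z, Λ₁ (t * z) ∂(gaussianReal 0 1) := rfl
        _ = ∫ z, Λ₁ (t * z) ∂((gaussianReal 0 1).map (fun x => (-1:ℝ) * x)) := by rw [hmapneg]
        _ = ∫ x, Λ₁ (t * ((-1) * x)) ∂(gaussianReal 0 1) :=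
            integral_map (measurable_id.const_mul _).aemeasurable
              ((hΛm.comp (measurable_id.const_mul t)).aestronglyMeasurable)
        _ = Fg Λ₁ (-t) := by
            rw [Fg_apply]
            congr 1
            funext x
            ring_nf
    exact this.symm
  have hFabs : ∀ t : ℝ, Fg Λ₁ |t| = Fg Λ₁ t := by
    intro t
    rcases abs_cases t with ⟨h, _⟩ | ⟨h, _⟩
    · rw [h]
    · rw [h, hFneg]
  -- the key projection identity
  have key : ∀ l : Fin k → ℝ,
      ∫ z, Λ₁ (∑ i, l i * z i) ∂(Measure.pi fun _ : Fin k => gaussianReal 0 1)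
        = Fg Λ₁ (Real.sqrt (∑ i, (l i)^2)) := by
    intro l
    by_cases hl : ∀ i, l i = 0
    · have h1 : ∀ z : Fin k → ℝ, (∑ i, l i * z i) = 0 := fun z => by simp [hl]
      have h2 : (∑ i, (l i)^2) = 0 := by simp [hl]
      simp_rw [h1, h2, Real.sqrt_zero, Fg_apply, zero_mul]
      simp [integral_const, measure_univ]
    · push_neg at hl
      obtain ⟨i₁, hi₁⟩ := hl
      have hsum : 0 < ∑ i, (l i)^2 :=
        Finset.sum_pos' (fun i _ => sq_nonneg _) ⟨i₁, Finset.mem_univ _, by positivity⟩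
      set r := Real.sqrt (∑ i, (l i)^2) with hrdef
      have hr : 0 < r := Real.sqrt_pos.2 hsum
      set lE : EuclideanSpace ℝ (Fin k) := (WithLp.equiv 2 _).symm l with hlEdef
      have hlE : ‖lE‖ = r := by
        rw [EuclideanSpace.norm_eq, hrdef]
        congr 1
        exact Finset.sum_congr rfl fun i _ => by
          simp [hlEdef, Real.norm_eq_abs, sq_abs]
      set u : EuclideanSpace ℝ (Fin k) := r⁻¹ • lE with hudef
      have hu : ‖u‖ = 1 := by
        rw [hudef, norm_smul, hlE, Real.norm_eq_abs, abs_of_pos (inv_pos.2 hr),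
          inv_mul_cancel₀ hr.ne']
      have horth : Orthonormal ℝ (({i₀} : Set (Fin k)).restrict (fun _ : Fin k => u)) := by
        constructor
        · intro i; exact hu
        · intro i j hij; exact absurd (Subsingleton.elim i j) hij
      obtain ⟨b, hb⟩ := horth.exists_orthonormalBasis_extension_of_card_eq
        (by simp [finrank_euclideanSpace])
      have hbi : b i₀ = u := hb i₀ rfl
      set U := b.repr.symm with hUdef
      have hU : MeasurePreserving U volume volume := b.measurePreserving_repr_symm
      set e := (MeasurableEquiv.toLp 2 (Fin k → ℝ)).symm with hedef
      have he : MeasurePreserving e volume volume :=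
        EuclideanSpace.volume_preserving_symm_measurableEquiv_toLp (Fin k)
      set T : (Fin k → ℝ) → (Fin k → ℝ) := fun z => e (U (e.symm z)) with hTdef
      have hT : MeasurePreserving T volume volume :=
        he.comp (hU.comp (MeasurePreserving.symm e he))
      have happ : ∀ z : Fin k → ℝ, ∀ i, T z i = U (e.symm z) i := fun z i => rfl
      have hTinner : ∀ z : Fin k → ℝ, ∑ i, l i * T z i = r * z i₀ := by
        intro z
        have h1 : ∑ i, l i * T z i = inner ℝ lE (U (e.symm z)) := by
          rw [PiLp.inner_apply]
          refine Finset.sum_congr rfl fun i _ => ?_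
          simp [hlEdef, RCLike.inner_apply, happ, mul_comm]
        have h2 : lE = r • (b i₀) := by
          rw [hbi, hudef, smul_smul, mul_inv_cancel₀ hr.ne', one_smul]
        rw [h1, h2, real_inner_smul_left]
        congr 1
        rw [← b.repr_apply_apply (U (e.symm z)) i₀, hUdef]
        simp only [LinearIsometryEquiv.apply_symm_apply]
        rfl
      have haux : ∀ y : EuclideanSpace ℝ (Fin k), ∑ i, (y i)^2 = ‖y‖^2 := by
        intro y
        rw [EuclideanSpace.norm_eq, Real.sq_sqrt (Finset.sum_nonneg fun i _ => sq_nonneg _)]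
        exact Finset.sum_congr rfl fun i _ => by simp [Real.norm_eq_abs, sq_abs]
      have hTnorm : ∀ z : Fin k → ℝ, ∑ i, (T z i)^2 = ∑ i, (z i)^2 := by
        intro z
        calc ∑ i, (T z i)^2 = ∑ i, (U (e.symm z) i)^2 := rfl
          _ = ‖U (e.symm z)‖^2 := haux _
          _ = ‖e.symm z‖^2 := by rw [LinearIsometryEquiv.norm_map]
          _ = ∑ i, (e.symm z i)^2 := (haux _).symm
          _ = ∑ i, (z i)^2 := rfl
      set Φ : (Fin k → ℝ) → ℝ≥0∞ := fun z => ∏ i, gaussianPDF 0 1 (z i) with hΦdef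
      have hΦm : Measurable Φ :=
        Finset.measurable_prod _ fun i _ =>
          (measurable_gaussianPDF _ _).comp (measurable_pi_apply i)
      have hΦform : ∀ w : Fin k → ℝ,
          Φ w = ENNReal.ofReal ((Real.sqrt (2*π))⁻¹ ^ k * Real.exp (-(∑ i, (w i)^2) / 2)) := by
        intro w
        rw [hΦdef]
        simp only [gaussianPDF]
        rw [← ENNReal.ofReal_prod_of_nonneg (fun i _ => gaussianPDFReal_nonneg _ _ _)]
        congr 1
        simp only [gaussianPDFReal, NNReal.coe_one, mul_one, sub_zero]
        rw [Finset.prod_mul_distrib, Finset.prod_const, ← Real.exp_sum,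
          Finset.card_univ, Fintype.card_fin]
        congr 1
        simp [neg_div, Finset.sum_div, Finset.sum_neg_distrib]
      have hΦT : ∀ z, Φ (T z) = Φ z := by
        intro z
        rw [hΦform, hΦform, hTnorm z]
      have hTmπ : MeasurePreserving T (Measure.pi fun _ : Fin k => gaussianReal 0 1)
          (Measure.pi fun _ : Fin k => gaussianReal 0 1) := by
        rw [pi_gaussian_eq k]
        refine ⟨hT.measurable, ?_⟩
        ext s hs
        rw [Measure.map_apply hT.measurable hs, withDensity_apply _ (hT.measurable hs),
          withDensity_apply _ hs]
        calc ∫⁻ z in T ⁻¹' s, Φ z ∂volume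
            = ∫⁻ z, (T ⁻¹' s).indicator Φ z ∂volume :=
              (lintegral_indicator (hT.measurable hs) Φ).symm
          _ = ∫⁻ z, s.indicator Φ (T z) ∂volume := by
              refine lintegral_congr fun z => ?_
              by_cases hz : T z ∈ s
              · rw [Set.indicator_of_mem hz, Set.indicator_of_mem (by exact hz), hΦT z]
              · rw [Set.indicator_of_notMem hz, Set.indicator_of_notMem (by exact hz)]
          _ = ∫⁻ w, s.indicator Φ w ∂volume := hT.lintegral_comp (hΦm.indicator hs)
          _ = ∫⁻ w in s, Φ w ∂volume := lintegral_indicator hs Φ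
      have hL : Measurable (fun z : Fin k → ℝ => ∑ i, l i * z i) :=
        Finset.measurable_sum _ fun i _ => (measurable_pi_apply (X := fun _ : Fin k => ℝ) i).const_mul (l i)
      have hmapL : (Measure.pi fun _ : Fin k => gaussianReal 0 1).map (fun z => ∑ i, l i * z i) = (gaussianReal 0 1).map (fun x => r * x) := by
        calc (Measure.pi fun _ : Fin k => gaussianReal 0 1).map (fun z => ∑ i, l i * z i)
            = ((Measure.pi fun _ : Fin k => gaussianReal 0 1).map T).map (fun z => ∑ i, l i * z i) := by rw [hTmπ.map_eq]
          _ = (Measure.pi fun _ : Fin k => gaussianReal 0 1).map ((fun z => ∑ i, l i * z i) ∘ T) := Measure.map_map hL hTmπ.measurable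
          _ = (Measure.pi fun _ : Fin k => gaussianReal 0 1).map ((fun x => r * x) ∘ (fun z : Fin k → ℝ => z i₀)) := by
              congr 1
              funext z
              exact hTinner z
          _ = ((Measure.pi fun _ : Fin k => gaussianReal 0 1).map (fun z : Fin k → ℝ => z i₀)).map (fun x => r * x) :=
              (Measure.map_map (measurable_id.const_mul r) (measurable_pi_apply i₀)).symm
          _ = (gaussianReal 0 1).map (fun x => r * x) := by rw [map_eval_pi_gaussian k i₀]
      calc ∫ z, Λ₁ (∑ i, l i * z i) ∂(Measure.pi fun _ : Fin k => gaussianReal 0 1)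
          = ∫ y, Λ₁ y ∂((Measure.pi fun _ : Fin k => gaussianReal 0 1).map (fun z => ∑ i, l i * z i)) :=
            (integral_map hL.aemeasurable hΛm.aestronglyMeasurable).symm
        _ = ∫ y, Λ₁ y ∂((gaussianReal 0 1).map (fun x => r * x)) := by rw [hmapL]
        _ = ∫ z, Λ₁ (r * z) ∂(gaussianReal 0 1) :=
            integral_map (measurable_id.const_mul r).aemeasurable hΛm.aestronglyMeasurable
        _ = Fg Λ₁ r := rfl
  -- rewrite Ik on the diagonal
  have hIkF : Ik (fun _ => c)
      = ⨆ l : Fin k → ℝ, (((∑ i, c * l i) - ∑ i, Fg Λ₁ (l i) : ℝ) : EReal) := by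
    rw [hIk]
    simp only [← Fg_apply]
  have hne : Nonempty (Fin k) := ⟨i₀⟩
  have hIkA : Ik (fun _ => c)
      = ⨆ t : ℝ, ((((k:ℝ) * (c * t - Fg Λ₁ t)) : ℝ) : EReal) := by
    rw [hIkF]
    apply le_antisymm
    · refine iSup_le fun l => ?_
      obtain ⟨j, -, hmax⟩ := Finset.exists_max_image Finset.univ
        (fun i => c * l i - Fg Λ₁ (l i)) (Finset.univ_nonempty)
      refine le_trans ?_ (le_iSup (fun t => ((((k:ℝ) * (c * t - Fg Λ₁ t)) : ℝ) : EReal)) (l j))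
      apply EReal.coe_le_coe_iff.2
      have hsum : ∑ i, (c * l i - Fg Λ₁ (l i)) ≤ ∑ _i : Fin k, (c * l j - Fg Λ₁ (l j)) :=
        Finset.sum_le_sum fun i _ => hmax i (Finset.mem_univ i)
      calc (∑ i, c * l i) - ∑ i, Fg Λ₁ (l i)
          = ∑ i, (c * l i - Fg Λ₁ (l i)) := (Finset.sum_sub_distrib _ _).symm
        _ ≤ ∑ _i : Fin k, (c * l j - Fg Λ₁ (l j)) := hsum
        _ = (k:ℝ) * (c * l j - Fg Λ₁ (l j)) := by
            rw [Finset.sum_const, Finset.card_univ, Fintype.card_fin, nsmul_eq_mul]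
    · refine iSup_le fun t => ?_
      refine le_trans ?_
        (le_iSup (fun l : Fin k → ℝ => (((∑ i, c * l i) - ∑ i, Fg Λ₁ (l i) : ℝ) : EReal))
          (fun _ => t))
      apply EReal.coe_le_coe_iff.2
      apply le_of_eq
      rw [Finset.sum_const, Finset.sum_const, Finset.card_univ, Fintype.card_fin, nsmul_eq_mul,
        nsmul_eq_mul]
      ring
  -- rewrite Iproj on the diagonal
  have hIprojF : Iproj (fun _ => c / Real.sqrt k)
      = ⨆ l : Fin k → ℝ,
          (((∑ i, (c / Real.sqrt k) * l i) - Fg Λ₁ (Real.sqrt (∑ i, (l i)^2)) : ℝ) : EReal) := by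
    rw [hIproj]
    refine iSup_congr fun l => ?_
    rw [← key l]
  have hIprojB : Iproj (fun _ => c / Real.sqrt k)
      = ⨆ t : ℝ, (((c * t - Fg Λ₁ t) : ℝ) : EReal) := by
    rw [hIprojF]
    apply le_antisymm
    · refine iSup_le fun l => ?_
      set s := Real.sqrt (∑ i, (l i)^2) with hsdef
      have hs0 : 0 ≤ s := Real.sqrt_nonneg _
      have hsq : (∑ i, l i)^2 ≤ (k:ℝ) * ∑ i, (l i)^2 := by
        simpa [Finset.card_univ, Fintype.card_fin] using
          sq_sum_le_card_mul_sum_sq (s := Finset.univ) (f := l)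
      have habs : |∑ i, l i| ≤ Real.sqrt k * s := by
        rw [← Real.sqrt_sq_eq_abs, hsdef, ← Real.sqrt_mul hk0.le]
        exact Real.sqrt_le_sqrt hsq
      have hterm : ∑ i, (c / Real.sqrt k) * l i ≤ |c| * s := by
        rw [← Finset.mul_sum]
        calc (c / Real.sqrt k) * ∑ i, l i ≤ |(c / Real.sqrt k) * ∑ i, l i| := le_abs_self _
          _ = |c| / Real.sqrt k * |∑ i, l i| := by
              rw [abs_mul, abs_div, abs_of_pos hks]
          _ ≤ |c| / Real.sqrt k * (Real.sqrt k * s) := by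
              exact mul_le_mul_of_nonneg_left habs (by positivity)
          _ = |c| * s := by field_simp
      set t₀ := if 0 ≤ c then s else -s with ht₀
      have h1 : c * t₀ = |c| * s := by
        rw [ht₀]
        split_ifs with hc
        · rw [abs_of_nonneg hc]
        · rw [abs_of_neg (not_le.1 hc)]; ring
      have h2 : Fg Λ₁ t₀ = Fg Λ₁ s := by
        rw [ht₀]
        split_ifs with hc
        · rfl
        · exact hFneg s
      refine le_trans ?_ (le_iSup (fun t => (((c * t - Fg Λ₁ t) : ℝ) : EReal)) t₀)
      apply EReal.coe_le_coe_iff.2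
      rw [h1, h2]
      linarith
    · refine iSup_le fun t => ?_
      refine le_trans ?_
        (le_iSup (fun l : Fin k → ℝ =>
          (((∑ i, (c / Real.sqrt k) * l i) - Fg Λ₁ (Real.sqrt (∑ i, (l i)^2)) : ℝ) : EReal))
          (fun _ => t / Real.sqrt k))
      apply EReal.coe_le_coe_iff.2
      apply le_of_eq
      have hss : Real.sqrt k * Real.sqrt k = (k:ℝ) := Real.mul_self_sqrt hk0.le
      have e1 : ∑ _i : Fin k, (c / Real.sqrt k) * (t / Real.sqrt k) = c * t := by
        rw [Finset.sum_const, Finset.card_univ, Fintype.card_fin, nsmul_eq_mul]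
        field_simp
        rw [Real.sq_sqrt hk0.le]; ring
      have e2 : Real.sqrt (∑ _i : Fin k, (t / Real.sqrt k)^2) = |t| := by
        rw [Finset.sum_const, Finset.card_univ, Fintype.card_fin, nsmul_eq_mul]
        rw [div_pow, Real.sq_sqrt hk0.le]
        rw [mul_div_cancel₀ _ hk0.ne']
        exact Real.sqrt_sq_eq_abs t
      rw [e1, e2, hFabs]
  rw [hIkA, hIprojB, ← ereal_k_mul_iSup k hk (fun t => c * t - Fg Λ₁ t)]

end
end

section
/- Let μ₁ be a probability measure on ℝ whose log-moment generating function Λ₁ is finite everywhere and satisfies E[Λ₁(tZ)] < ∞ for all t ∈ ℝ (Z a standard real Gaussian). Then for every integer k ≥ 1 and every c ∈ ℝ, sup_{λ∈ℝ^k} {⟨λ, c·𝟙_k⟩ − E[Λ₁(‖λ‖Z)]} = sup_{t∈ℝ} {k t c − E[Λ₁(√k · t · Z)]}, where 𝟙_k ∈ ℝ^k denotes the all-ones vector; that is, in this supremum the optimal λ may be taken of the form t·𝟙_k. -/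
open MeasureTheory ProbabilityTheory Real

noncomputable section

/-- positivity of the mgf integral -/
lemma mgf_int_pos (μ₁ : Measure ℝ) [IsProbabilityMeasure μ₁]
    (hmgf : ∀ t : ℝ, Integrable (fun x => Real.exp (t * x)) μ₁) (u : ℝ) :
    0 < ∫ x, Real.exp (u * x) ∂μ₁ := by
  have h := ProbabilityTheory.mgf_pos (μ := μ₁) (X := fun x => x) (hmgf u)
  simpa [ProbabilityTheory.mgf] using h

/-- the cgf satisfies `Λ(θ s) ≤ θ Λ(s)` for `θ ∈ [0,1]` (convexity through `0`). -/
lemma cgf_segment (μ₁ : Measure ℝ) [IsProbabilityMeasure μ₁]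
    (hmgf : ∀ t : ℝ, Integrable (fun x => Real.exp (t * x)) μ₁)
    {θ : ℝ} (hθ0 : 0 ≤ θ) (hθ1 : θ ≤ 1) (s : ℝ) :
    Real.log (∫ x, Real.exp ((θ * s) * x) ∂μ₁)
      ≤ θ * Real.log (∫ x, Real.exp (s * x) ∂μ₁) := by
  have hMpos := mgf_int_pos μ₁ hmgf
  rcases eq_or_lt_of_le hθ0 with h0 | h0
  · simp [← h0]
  rcases eq_or_lt_of_le hθ1 with h1 | h1
  · subst h1; simp
  have hpq : Real.HolderConjugate (1/θ) (1/(1-θ)) := by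
    rw [Real.holderConjugate_iff]; constructor
    · exact one_lt_one_div h0 h1
    · simp only [one_div, inv_inv]; ring
  have hmeas : AEMeasurable (fun x : ℝ => ENNReal.ofReal (Real.exp (s * x))) μ₁ :=
    (ENNReal.measurable_ofReal.comp (Real.measurable_exp.comp (measurable_id.const_mul s))).aemeasurable
  have key := ENNReal.lintegral_mul_le_Lp_mul_Lq μ₁ hpq
    (f := fun x => ENNReal.ofReal (Real.exp (s * x)) ^ θ) (g := fun _ => 1)
    (hmeas.pow_const θ) aemeasurable_const
  have hfp : ∀ x : ℝ, (ENNReal.ofReal (Real.exp (s * x)) ^ θ) ^ (1/θ)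
      = ENNReal.ofReal (Real.exp (s * x)) := by
    intro x
    rw [← ENNReal.rpow_mul, mul_one_div_cancel h0.ne', ENNReal.rpow_one]
  simp only [Pi.mul_apply, mul_one, hfp, ENNReal.one_rpow, lintegral_one, measure_univ,
    ENNReal.one_rpow, mul_one, one_div_one_div] at key
  have hlhs : ∀ x : ℝ, ENNReal.ofReal (Real.exp (s * x)) ^ θ
      = ENNReal.ofReal (Real.exp ((θ * s) * x)) := by
    intro x
    rw [ENNReal.ofReal_rpow_of_pos (Real.exp_pos _), ← Real.exp_mul]
    ring_nf
  simp only [hlhs] at key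
  rw [← ofReal_integral_eq_lintegral_ofReal (hmgf (θ * s))
      (Filter.Eventually.of_forall fun x => (Real.exp_pos _).le),
    ← ofReal_integral_eq_lintegral_ofReal (hmgf s)
      (Filter.Eventually.of_forall fun x => (Real.exp_pos _).le),
    ENNReal.ofReal_rpow_of_pos (hMpos s)] at key
  have hAB : (∫ x, Real.exp ((θ * s) * x) ∂μ₁)
      ≤ (∫ x, Real.exp (s * x) ∂μ₁) ^ θ :=
    (ENNReal.ofReal_le_ofReal_iff (Real.rpow_nonneg (hMpos s).le θ)).mp key
  calc Real.log (∫ x, Real.exp ((θ * s) * x) ∂μ₁)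
      ≤ Real.log ((∫ x, Real.exp (s * x) ∂μ₁) ^ θ) :=
        Real.log_le_log (hMpos _) hAB
    _ = θ * Real.log (∫ x, Real.exp (s * x) ∂μ₁) := Real.log_rpow (hMpos s) θ

/-- `Λ(s) + Λ(-s) ≥ 0` by Cauchy–Schwarz. -/
lemma cgf_add_neg_nonneg (μ₁ : Measure ℝ) [IsProbabilityMeasure μ₁]
    (hmgf : ∀ t : ℝ, Integrable (fun x => Real.exp (t * x)) μ₁) (s : ℝ) :
    0 ≤ Real.log (∫ x, Real.exp (s * x) ∂μ₁)
        + Real.log (∫ x, Real.exp ((-s) * x) ∂μ₁) := by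
  have hMpos := mgf_int_pos μ₁ hmgf
  have hpq : Real.HolderConjugate 2 2 := Real.holderConjugate_iff.mpr ⟨one_lt_two, by norm_num⟩
  have hmeas : ∀ u : ℝ, AEMeasurable (fun x : ℝ => ENNReal.ofReal (Real.exp (u * x))) μ₁ :=
    fun u => (ENNReal.measurable_ofReal.comp
      (Real.measurable_exp.comp (measurable_id.const_mul u))).aemeasurable
  have key := ENNReal.lintegral_mul_le_Lp_mul_Lq μ₁ hpq
    (f := fun x => ENNReal.ofReal (Real.exp ((s/2) * x)))
    (g := fun x => ENNReal.ofReal (Real.exp ((-s/2) * x)))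
    (hmeas _) (hmeas _)
  have hprod : ∀ x : ℝ, ENNReal.ofReal (Real.exp ((s/2) * x))
      * ENNReal.ofReal (Real.exp ((-s/2) * x)) = 1 := by
    intro x
    rw [← ENNReal.ofReal_mul (Real.exp_pos _).le, ← Real.exp_add]
    have h : s/2*x + -s/2*x = 0 := by ring
    rw [h]; simp
  have hsq : ∀ u x : ℝ, ENNReal.ofReal (Real.exp ((u/2) * x)) ^ (2:ℝ)
      = ENNReal.ofReal (Real.exp (u * x)) := by
    intro u x
    rw [ENNReal.ofReal_rpow_of_pos (Real.exp_pos _), ← Real.exp_mul]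
    ring_nf
  simp only [Pi.mul_apply, hprod, lintegral_one, measure_univ, hsq] at key
  rw [← ofReal_integral_eq_lintegral_ofReal (hmgf s)
      (Filter.Eventually.of_forall fun x => (Real.exp_pos _).le),
    ← ofReal_integral_eq_lintegral_ofReal (hmgf (-s))
      (Filter.Eventually.of_forall fun x => (Real.exp_pos _).le),
    ENNReal.ofReal_rpow_of_pos (hMpos s), ENNReal.ofReal_rpow_of_pos (hMpos (-s)),
    ← ENNReal.ofReal_mul (Real.rpow_nonneg (hMpos s).le _), ← ENNReal.ofReal_one] at key
  have h1 : (1:ℝ) ≤ (∫ x, Real.exp (s * x) ∂μ₁) ^ (1/2:ℝ)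
      * (∫ x, Real.exp ((-s) * x) ∂μ₁) ^ (1/2:ℝ) :=
    (ENNReal.ofReal_le_ofReal_iff
      (mul_nonneg (Real.rpow_nonneg (hMpos s).le _) (Real.rpow_nonneg (hMpos (-s)).le _))).mp key
  have hlog : (0:ℝ) ≤ Real.log ((∫ x, Real.exp (s * x) ∂μ₁) ^ (1/2:ℝ)
      * (∫ x, Real.exp ((-s) * x) ∂μ₁) ^ (1/2:ℝ)) := by
    simpa using Real.log_le_log one_pos h1
  rw [Real.log_mul (Real.rpow_pos_of_pos (hMpos s) _).ne'
      (Real.rpow_pos_of_pos (hMpos (-s)) _).ne',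
    Real.log_rpow (hMpos s), Real.log_rpow (hMpos (-s))] at hlog
  linarith

theorem sup_on_diagonal_eq_one_dimensional_sup
    (μ₁ : Measure ℝ) [IsProbabilityMeasure μ₁]
    (Λ₁ : ℝ → ℝ) (hΛ₁ : Λ₁ = fun t => Real.log (∫ x, Real.exp (t * x) ∂μ₁))
    -- `Λ₁` is finite everywhere
    (hmgf : ∀ t : ℝ, Integrable (fun x => Real.exp (t * x)) μ₁)
    -- `E[Λ₁(tZ)] < ∞` for all `t`
    (hgauss : ∀ t : ℝ, Integrable (fun z => Λ₁ (t * z)) (gaussianReal 0 1))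
    (k : ℕ) (hk : 1 ≤ k) (c : ℝ) :
    (⨆ l : Fin k → ℝ,
        (((∑ i, l i * c) -
          ∫ z, Λ₁ (Real.sqrt (∑ i, l i ^ 2) * z) ∂(gaussianReal 0 1) : ℝ) : EReal))
      = ⨆ t : ℝ,
        (((k : ℝ) * t * c -
          ∫ z, Λ₁ (Real.sqrt k * t * z) ∂(gaussianReal 0 1) : ℝ) : EReal) := by
  set γ := gaussianReal 0 1 with hγ
  set g : ℝ → ℝ := fun a => ∫ z, Λ₁ (a * z) ∂γ with hg
  -- symmetry of the Gaussian integral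
  have hsym : ∀ u : ℝ, g (-u) = g u := by
    intro u
    have hmap : γ.map (fun x => (-1 : ℝ) * x) = γ := by
      rw [hγ, gaussianReal_map_const_mul]
      norm_num
    have := MeasureTheory.integral_map (μ := γ) (φ := fun x => (-1:ℝ) * x)
      (measurable_id.const_mul (-1:ℝ)).aemeasurable
      (f := fun z => Λ₁ (u * z)) (by rw [hmap]; exact (hgauss u).1)
    rw [hmap] at this
    calc g (-u) = ∫ z, Λ₁ (u * ((-1) * z)) ∂γ := by
            simp only [hg]; congr 1; funext z; ring_nf
      _ = ∫ z, Λ₁ (u * z) ∂γ := this.symm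
      _ = g u := rfl
  have hgeven : ∀ u : ℝ, g u = g |u| := by
    intro u
    rcases le_or_gt 0 u with h | h
    · rw [abs_of_nonneg h]
    · rw [abs_of_neg h]; exact (hsym u).symm
  -- nonnegativity of g
  have hg0 : ∀ u : ℝ, 0 ≤ g u := by
    intro u
    have hpt : ∀ z : ℝ, 0 ≤ Λ₁ (u * z) + Λ₁ (-u * z) := by
      intro z
      have := cgf_add_neg_nonneg μ₁ hmgf (u * z)
      rw [hΛ₁]
      simpa [neg_mul] using this
    have hint : 0 ≤ ∫ z, (Λ₁ (u * z) + Λ₁ (-u * z)) ∂γ :=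
      integral_nonneg fun z => hpt z
    rw [integral_add (hgauss u) (hgauss (-u))] at hint
    have : (0:ℝ) ≤ g u + g (-u) := hint
    rw [hsym u] at this
    linarith
  -- monotonicity of g on the nonnegative half line
  have hmono : ∀ a b : ℝ, 0 ≤ a → a ≤ b → g a ≤ g b := by
    intro a b ha hab
    rcases eq_or_lt_of_le (ha.trans hab) with hb | hb
    · have : a = b := le_antisymm hab (hb ▸ ha)
      rw [this]
    · set θ := a / b with hθ
      have hθ0 : 0 ≤ θ := div_nonneg ha hb.le
      have hθ1 : θ ≤ 1 := (div_le_one hb).mpr hab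
      have hpt : ∀ z : ℝ, Λ₁ (a * z) ≤ θ * Λ₁ (b * z) := by
        intro z
        have := cgf_segment μ₁ hmgf hθ0 hθ1 (b * z)
        rw [hΛ₁]
        have harg : θ * (b * z) = a * z := by
          rw [hθ]; field_simp
        simpa [harg] using this
      have h1 : g a ≤ ∫ z, θ * Λ₁ (b * z) ∂γ :=
        integral_mono (hgauss a) ((hgauss b).const_mul θ) fun z => hpt z
      rw [MeasureTheory.integral_const_mul] at h1
      have h2 : θ * g b ≤ g b := by
        nlinarith [hg0 b]
      exact h1.trans h2
  have hk0 : (0:ℝ) < (k:ℝ) := by exact_mod_cast hk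
  apply le_antisymm
  · -- sup over l ≤ sup over t
    apply iSup_le
    intro l
    set S := ∑ i, l i with hS
    set t := S / k with ht
    have hkne : (k:ℝ) ≠ 0 := hk0.ne'
    have h1 : (∑ i, l i * c) = (k:ℝ) * t * c := by
      rw [← Finset.sum_mul, ← hS, ht]
      field_simp
    have h2 : g (Real.sqrt k * t) ≤ g (Real.sqrt (∑ i, l i ^ 2)) := by
      rw [hgeven (Real.sqrt k * t)]
      apply hmono _ _ (abs_nonneg _)
      rw [← Real.sqrt_sq_eq_abs]
      apply Real.sqrt_le_sqrt
      have hcs : S ^ 2 ≤ (∑ i, l i ^ 2) * k := by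
        have := Finset.sum_mul_sq_le_sq_mul_sq Finset.univ l (fun _ => (1:ℝ))
        simpa [← hS, Finset.card_univ] using this
      have : (Real.sqrt k * t) ^ 2 = S ^ 2 / k := by
        rw [mul_pow, Real.sq_sqrt hk0.le, ht]
        field_simp
      rw [this, div_le_iff₀ hk0]
      exact hcs
    have hle : ((∑ i, l i * c) - g (Real.sqrt (∑ i, l i ^ 2)) : ℝ)
        ≤ ((k:ℝ) * t * c - g (Real.sqrt k * t) : ℝ) := by
      rw [h1]; linarith
    refine le_trans ?_ (le_iSup (fun t : ℝ =>
      (((k : ℝ) * t * c - ∫ z, Λ₁ (Real.sqrt k * t * z) ∂γ : ℝ) : EReal)) t)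
    exact_mod_cast hle
  · -- sup over t ≤ sup over l
    apply iSup_le
    intro t
    have h1 : (∑ _i : Fin k, t * c) = (k:ℝ) * t * c := by
      rw [Finset.sum_const, Finset.card_univ, Fintype.card_fin, nsmul_eq_mul]
      ring
    have h2 : Real.sqrt (∑ _i : Fin k, t ^ 2) = Real.sqrt k * |t| := by
      rw [Finset.sum_const, Finset.card_univ, Fintype.card_fin, nsmul_eq_mul,
        Real.sqrt_mul (by positivity), Real.sqrt_sq_eq_abs]
    have h3 : g (Real.sqrt (∑ _i : Fin k, t ^ 2)) = g (Real.sqrt k * t) := by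
      rw [h2]
      conv_rhs => rw [hgeven]
      rw [abs_mul, abs_of_nonneg (Real.sqrt_nonneg _)]
    have heq : ((k : ℝ) * t * c - g (Real.sqrt k * t) : ℝ)
        = ((∑ _i : Fin k, t * c) - g (Real.sqrt (∑ _i : Fin k, t ^ 2)) : ℝ) := by
      rw [h1, h3]
    refine le_trans ?_ (le_iSup (fun l : Fin k → ℝ =>
      (((∑ i, l i * c) - ∫ z, Λ₁ (Real.sqrt (∑ i, l i ^ 2) * z) ∂γ : ℝ) : EReal))
      (fun _ => t))
    exact_mod_cast heq.le

end
end
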